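/- arXiv:1003.4422 — 2 statements merged into one kernel-verified Lean document; each statement's English description precedes it below -/
import Mathlib

section
/- Let N = k^t q with k ≥ 2, t ≥ 1, gcd(q,k)=1, and let f(A) = (kA + A_{t-1}) mod N as above. Then the orbit of 1 under f has length exactly ord_k(N-q); i.e., the least r ≥ 1 with f^r(1) = 1 equals the multiplicative order of k modulo N - q. -/
/-!
Put `D = k ^ t - 1`, so that `N - q = q D`. The map `ψ y = y + y / D + 1` is a bijection from
`[0, q D)` onto the `A < N` not divisible by `k ^ t`, and it conjugates
`y ↦ (k y + k - 1) mod q D` to `f`: writing `ψ y = k ^ t a + c` with `0 < c < k ^ t`, `f` rotates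
the `t` low base-`k` digits of `c` and replaces `a` by `(k a + c_{t-1}) mod q`. Since
`y ↦ y + 1` turns `y ↦ (k y + k - 1) mod q D` into multiplication by `k` modulo `q D`, we get
`f^[r] 1 = ψ ((k ^ r - 1) mod q D)`, which is `1` exactly when `k ^ r ≡ 1 [MOD q D]`.
-/

/-- The `y`-th positive integer, counting from `0`, that is not a multiple of `D + 1`. -/
def nthNonMultiple (D y : ℕ) : ℕ := y + y / D + 1

theorem nthNonMultiple_mul_add {D b : ℕ} (a : ℕ) (hb : b < D) :
    nthNonMultiple D (D * a + b) = (D + 1) * a + (b + 1) := by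
  rw [nthNonMultiple, Nat.mul_add_div (by omega), Nat.div_eq_of_lt hb]
  ring

theorem nthNonMultiple_eq_one_iff {D y : ℕ} : nthNonMultiple D y = 1 ↔ y = 0 := by
  simp only [nthNonMultiple, Nat.add_eq_right, Nat.add_eq_zero_iff, and_iff_left_iff_imp]
  rintro rfl
  exact Nat.zero_div D

theorem mul_add_mod_mul_of_lt {D c : ℕ} (x q : ℕ) (hc : c < D) :
    (D * x + c) % (D * q) = D * (x % q) + c := by
  rw [Nat.mod_mul, Nat.mul_add_mod, Nat.mod_eq_of_lt hc, Nat.mul_add_div (by omega),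
    Nat.div_eq_of_lt hc, add_zero, add_comm]

theorem mul_mul_add_div_mod_of_lt {k P c : ℕ} (a : ℕ) (hc : c < k * P) :
    (k * P * a + c) / P % k = c / P := by
  have hP : 0 < P := Nat.pos_of_mul_pos_left (c.zero_le.trans_lt hc)
  have hcP : c / P < k := Nat.div_lt_of_lt_mul (mul_comm k P ▸ hc)
  rw [mul_comm k P, mul_assoc, Nat.mul_add_div hP, Nat.mul_add_mod, Nat.mod_eq_of_lt hcP]

/-- For `P = k ^ (t - 1)` and `c < k ^ t`, the cyclic left shift of the `t` base-`k` digits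
of `c`. -/
def rotateDigits (k P c : ℕ) : ℕ := k * (c % P) + c / P

theorem mul_add_div_eq_rotateDigits (k P c : ℕ) :
    k * c + c / P = k * P * (c / P) + rotateDigits k P c := by
  rw [rotateDigits]
  conv_lhs => arg 1; rw [← Nat.div_add_mod c P]
  ring

theorem rotateDigits_pos {k P c : ℕ} (hk : 0 < k) (hc : 0 < c) : 0 < rotateDigits k P c := by
  rcases Nat.eq_zero_or_pos (c / P) with h | h
  · have : 0 < c % P := by
      rw [← Nat.div_add_mod c P, h, mul_zero, zero_add] at hc; exact hc
    exact Nat.add_pos_left (Nat.mul_pos hk this) _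
  · exact Nat.add_pos_right _ h

theorem rotateDigits_lt {k P c : ℕ} (hc : c < k * P) : rotateDigits k P c < k * P := by
  have hP : 0 < P := Nat.pos_of_mul_pos_left (c.zero_le.trans_lt hc)
  have hcP : c / P < k := Nat.div_lt_of_lt_mul (mul_comm k P ▸ hc)
  have hcP' : c % P + 1 ≤ P := Nat.mod_lt c hP
  calc k * (c % P) + c / P < k * (c % P) + k := by omega
    _ = k * (c % P + 1) := by ring
    _ ≤ k * P := Nat.mul_le_mul_left k hcP'

/-- The map `f` of the statement, with `P = k ^ (t - 1)`, so that `A / P % k` is the digit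
`A_{t-1}`. -/
def digitShift (k P N A : ℕ) : ℕ := (k * A + A / P % k) % N

theorem digitShift_nthNonMultiple {k P q y : ℕ} (hy : y < q * (k * P - 1)) :
    digitShift k P (k * P * q) (nthNonMultiple (k * P - 1) y) =
      nthNonMultiple (k * P - 1) ((k * y + (k - 1)) % (q * (k * P - 1))) := by
  set D := k * P - 1 with hD
  have hDpos : 0 < D := Nat.pos_of_mul_pos_left (y.zero_le.trans_lt hy)
  have hK : k * P = D + 1 := by omega
  have hk : 0 < k := Nat.pos_of_mul_pos_right (by omega : 0 < k * P)
  obtain ⟨a, b, hb, rfl⟩ : ∃ a b, b < D ∧ y = D * a + b :=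
    ⟨y / D, y % D, Nat.mod_lt _ hDpos, (Nat.div_add_mod y D).symm⟩
  have hc : b + 1 < k * P := by omega
  set e := (b + 1) / P
  set c' := rotateDigits k P (b + 1)
  have hc'pos : 0 < c' := rotateDigits_pos hk b.succ_pos
  have hc'lt : c' < k * P := rotateDigits_lt hc
  have hrot : k * (b + 1) + e = k * P * e + c' := mul_add_div_eq_rotateDigits k P (b + 1)
  have hKe : k * P * e = D * e + e := by rw [hK]; ring
  have hnext : k * (D * a + b) + (k - 1) = D * (k * a + e) + (c' - 1) := by
    have : k * (D * a + b) + k = D * (k * a + e) + c' := by linarith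
    omega
  -- both sides reduce to `k P ((k a + e) % q) + c'`
  rw [nthNonMultiple_mul_add a hb, hnext, mul_comm q D, mul_add_mod_mul_of_lt _ _ (by omega),
    nthNonMultiple_mul_add _ (by omega), ← hK, Nat.sub_add_cancel hc'pos, digitShift,
    mul_mul_add_div_mod_of_lt a hc]
  calc (k * (k * P * a + (b + 1)) + e) % (k * P * q)
      = (k * P * (k * a + e) + c') % (k * P * q) := by
        congr 1; linarith
    _ = k * P * ((k * a + e) % q) + c' := mul_add_mod_mul_of_lt _ _ hc'lt

theorem digitShift_iterate_one {k P q : ℕ} (hM : 0 < q * (k * P - 1)) (r : ℕ) :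
    (digitShift k P (k * P * q))^[r] 1 =
      nthNonMultiple (k * P - 1) ((k ^ r - 1) % (q * (k * P - 1))) := by
  have hk : 0 < k := Nat.pos_of_ne_zero fun h => by simp [h] at hM
  induction r with
  | zero => simp [nthNonMultiple]
  | succ r ih =>
    have hkr : 1 ≤ k ^ r := Nat.one_le_pow _ _ hk
    have hkr' : 1 ≤ k ^ (r + 1) := Nat.one_le_pow _ _ hk
    have hpow : k * (k ^ r - 1) + (k - 1) = k ^ (r + 1) - 1 := by
      zify [hkr, hk, hkr']; ring
    rw [Function.iterate_succ_apply', ih, digitShift_nthNonMultiple (Nat.mod_lt _ hM), ← hpow]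
    exact congrArg _ (((Nat.mod_modEq _ _).mul_left k).add_right (k - 1))

theorem isLeast_orderOf {G : Type*} [Monoid G] {x : G} (hx : IsOfFinOrder x) :
    IsLeast {r | 1 ≤ r ∧ x ^ r = 1} (orderOf x) :=
  ⟨⟨hx.orderOf_pos, pow_orderOf_eq_one x⟩,
    fun _ ⟨hr, hxr⟩ => orderOf_le_of_pow_eq_one hr hxr⟩

theorem natCast_pow_eq_one_iff {k M : ℕ} (hk : 0 < k) (r : ℕ) :
    (k : ZMod M) ^ r = 1 ↔ (k ^ r - 1) % M = 0 := by
  rw [← Nat.dvd_iff_mod_eq_zero, ← Nat.modEq_iff_dvd' (Nat.one_le_pow _ _ hk),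
    ← ZMod.natCast_eq_natCast_iff, eq_comm]
  push_cast
  rfl

theorem orbit_of_one (N k t q : ℕ) (hk : 2 ≤ k) (ht : 1 ≤ t) (hq : 1 ≤ q)
    (hco : Nat.Coprime q k) (hN : N = k ^ t * q)
    (f : ℕ → ℕ) (hf : ∀ A, f A = (k * A + A / k ^ (t - 1) % k) % N) :
    IsLeast {r : ℕ | 1 ≤ r ∧ f^[r] 1 = 1} (orderOf (k : ZMod (N - q))) := by
  set P := k ^ (t - 1)
  have hK : k ^ t = k * P := by rw [← pow_succ', Nat.sub_add_cancel ht]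
  have hM : N - q = q * (k * P - 1) := by
    rw [hN, hK, Nat.mul_sub, mul_one, mul_comm]
  have hKgt : 2 ≤ k * P := Nat.mul_le_mul hk (Nat.one_le_pow _ _ (by omega))
  have hMpos : 0 < q * (k * P - 1) := Nat.mul_pos hq (by omega)
  have hf' : f = digitShift k P (k * P * q) := funext fun A => by rw [hf, hN, hK, digitShift]
  have hunit : IsUnit (k : ZMod (N - q)) := by
    have hkD : Nat.Coprime (k * P - 1) k :=
      ((Nat.coprime_self_sub_left (by omega)).mpr (Nat.coprime_one_left _)).coprime_mul_right_right
    rw [ZMod.isUnit_iff_coprime, hM]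
    exact hco.symm.mul_right hkD.symm
  have : NeZero (N - q) := ⟨by omega⟩
  convert isLeast_orderOf (isOfFinOrder_iff_isUnit.mpr hunit) using 3 with r
  rw [hf', digitShift_iterate_one hMpos, nthNonMultiple_eq_one_iff, ← hM,
    natCast_pow_eq_one_iff (by omega)]
end

section
/- Let N = k n = k^t q with k ≥ 2, t ≥ 1, and suppose gcd(q/g, g) = 1 where g = gcd(q,k). Define ψ(A) = A_0 + ... + A_{t-1} + (A_t mod g) using base-k digits. Then for every ℓ ∈ {0,...,n-1}, the multiset {ψ(ℓ+in) : 0 ≤ i ≤ k-1} equals the multiset {ψ(kℓ+i) : 0 ≤ i ≤ k-1}. -/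
/-!
Write `b = ⌊ℓ / k^(t-1)⌋`. The number `ℓ + i n` has the same `t - 1` low digits as `ℓ` and
`b + i q` above them, while `k ℓ + i` has the digit `i` followed by the digits of `ℓ`. Removing
the common low-digit sum, it remains to show that `F x = x mod k + ⌊x / k⌋ mod g` takes each
value of `b mod g + {0, …, k - 1}` exactly once on `x = b + i q`, `i < k`. Since `g ∣ q` and
`g ∣ k`, `x mod k ≡ b (mod g)`, which puts `F x` in that range and makes `F x` determine
`x mod kg`. Finally the residues `b + i q mod kg` are distinct: `gcd (kg, q) = g` because
`q / g` is coprime to both `g` and `k / g`, so `i q ≡ j q (mod kg)` forces `i ≡ j (mod k)`.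
-/

open Finset

theorem Finset.range_val_map_eq_map_add_of_injOn {f : ℕ → ℕ} {c k : ℕ}
    (hf : Set.InjOn f (range k)) (hmem : ∀ i < k, c ≤ f i ∧ f i < c + k) :
    (range k).val.map f = (range k).val.map (c + ·) := by
  rw [← image_val_of_injOn hf, ← image_val_of_injOn (add_right_injective c).injOn]
  congr 1
  refine eq_of_subset_of_card_le ?_ ?_
  · intro y hy
    obtain ⟨i, hi, rfl⟩ := mem_image.1 hy
    have := hmem i (mem_range.1 hi)
    exact mem_image.2 ⟨f i - c, mem_range.2 (by omega), by omega⟩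
  · rw [card_image_of_injOn hf, card_image_of_injective _ (add_right_injective c)]

namespace Nat

variable {g k q : ℕ}

theorem gcd_mul_gcd_eq_gcd_of_coprime (hco : Coprime (q / gcd q k) (gcd q k)) :
    gcd (k * gcd q k) q = gcd q k := by
  set g := gcd q k
  have hq : g * (q / g) = q := Nat.mul_div_cancel' (gcd_dvd_left q k)
  have hcop : Coprime k (q / g) := by
    refine eq_one_of_dvd_coprimes hco (gcd_dvd_right _ _) (Nat.dvd_gcd ?_ (gcd_dvd_left _ _))
    exact (gcd_dvd_right _ _).trans ⟨g, by rw [mul_comm, hq]⟩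
  calc gcd (k * g) q = gcd (g * k) (g * (q / g)) := by rw [mul_comm, hq]
    _ = g := by rw [gcd_mul_left, hcop.gcd_eq_one, mul_one]

theorem injOn_add_mul_mod_mul_gcd (b : ℕ) (hco : Coprime (q / gcd q k) (gcd q k)) :
    Set.InjOn (fun i => (b + i * q) % (k * gcd q k)) (range k) := by
  intro i hi j hj h
  rw [coe_range, Set.mem_Iio] at hi hj
  have hg : 0 < gcd q k := gcd_pos_of_pos_right q (by omega)
  have h := (ModEq.add_left_cancel' b h).cancel_right_div_gcd (Nat.mul_pos (by omega) hg)
  rw [gcd_mul_gcd_eq_gcd_of_coprime hco, Nat.mul_div_cancel _ hg] at h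
  exact h.eq_of_lt_of_lt hi hj

theorem mod_add_div_mod_lt (hgk : g ∣ k) (hk : 0 < k) (x : ℕ) :
    x % k + x / k % g < x % k % g + k := by
  have hlt : x % k / g < k / g := div_lt_div_of_lt_of_dvd hgk (mod_lt x hk)
  have hle : g * (x % k / g + 1) ≤ k := by
    calc g * (x % k / g + 1) ≤ g * (k / g) := Nat.mul_le_mul_left g hlt
      _ = k := Nat.mul_div_cancel' hgk
  rw [mul_add_one] at hle
  have := div_add_mod (x % k) g
  have := mod_lt (x / k) (pos_of_dvd_of_pos hgk hk)
  linarith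

theorem mod_mul_eq_of_mod_add_div_mod_eq {x y : ℕ} (hg : 0 < g) (hres : x % k % g = y % k % g)
    (h : x % k + x / k % g = y % k + y / k % g) : x % (k * g) = y % (k * g) := by
  have hx := div_add_mod (x % k) g
  have hy := div_add_mod (y % k) g
  have hxy : g * (x % k / g) + x / k % g = g * (y % k / g) + y / k % g := by omega
  have hdiv : x % k / g = y % k / g := by
    simpa only [mul_add_div hg, div_eq_of_lt (mod_lt _ hg), add_zero] using congrArg (· / g) hxy
  have hmod : x / k % g = y / k % g := by
    simpa only [mul_add_mod, mod_mod] using congrArg (· % g) hxy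
  have hr : x % k = y % k := by linarith
  rw [mod_mul, mod_mul, hr, hmod]

theorem range_val_map_add_mul_mod_add_div_mod (b : ℕ)
    (hco : Coprime (q / gcd q k) (gcd q k)) :
    (range k).val.map (fun i => (b + i * q) % k + (b + i * q) / k % gcd q k) =
      (range k).val.map (b % gcd q k + ·) := by
  have hres : ∀ i, (b + i * q) % k % gcd q k = b % gcd q k := fun i => by
    obtain ⟨c, hc⟩ := (gcd_dvd_left q k).mul_left i
    rw [mod_mod_of_dvd _ (gcd_dvd_right q k), hc, add_mul_mod_self_left]
  refine range_val_map_eq_map_add_of_injOn (fun i hi j hj h => ?_) fun i hi => ?_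
  · refine injOn_add_mul_mod_mul_gcd b hco hi hj ?_
    have hk : 0 < k := by rw [coe_range, Set.mem_Iio] at hi; omega
    exact mod_mul_eq_of_mod_add_div_mod_eq (gcd_pos_of_pos_right q hk)
      ((hres i).trans (hres j).symm) h
  · rw [← hres i]
    exact ⟨(mod_le _ _).trans (le_add_right _ _),
      mod_add_div_mod_lt (gcd_dvd_right q k) (by omega) _⟩

end Nat

/-- The weight `ψ` of the paper. -/
def digitWeight (k t g A : ℕ) : ℕ :=
  (∑ i ∈ range t, A / k ^ i % k) + A / k ^ t % k % g

theorem digitWeight_add (k t s g A : ℕ) :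
    digitWeight k (t + s) g A =
      ∑ m ∈ range t, A / k ^ m % k + digitWeight k s g (A / k ^ t) := by
  simp only [digitWeight, sum_range_add, Nat.div_div_eq_div_mul, ← pow_add, add_assoc]

theorem digitWeight_one {g k : ℕ} (hgk : g ∣ k) (A : ℕ) :
    digitWeight k 1 g A = A % k + A / k % g := by
  simp [digitWeight, Nat.mod_mod_of_dvd _ hgk]

theorem digitWeight_succ_mul_add {g i k : ℕ} (t ℓ : ℕ) (hi : i < k) :
    digitWeight k (t + 1) g (k * ℓ + i) = i + digitWeight k t g ℓ := by
  rw [add_comm t, digitWeight_add, pow_one, Nat.mul_add_div (by omega), Nat.div_eq_of_lt hi,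
    add_zero, sum_range_one, pow_zero, Nat.div_one, Nat.mul_add_mod, Nat.mod_eq_of_lt hi]

theorem sum_range_add_pow_mul_div_pow_mod {k : ℕ} (hk : 0 < k) (t A c : ℕ) :
    ∑ m ∈ range t, (A + k ^ t * c) / k ^ m % k = ∑ m ∈ range t, A / k ^ m % k := by
  refine sum_congr rfl fun m hm => ?_
  obtain ⟨d, rfl⟩ : ∃ d, t = m + 1 + d := ⟨t - m - 1, by rw [mem_range] at hm; omega⟩
  rw [pow_add, pow_succ, mul_assoc, mul_assoc, Nat.add_mul_div_left _ _ (pow_pos hk m),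
    Nat.add_mul_mod_self_left]

theorem column_block_weights_general_general (n k t q : ℕ) (ht : 1 ≤ t)
    (hn : n = k ^ (t - 1) * q)
    (g : ℕ) (hg : g = Nat.gcd q k) (hco : Nat.Coprime (q / g) g)
    (ψ : ℕ → ℕ)
    (hψ : ∀ A, ψ A = (∑ i ∈ Finset.range t, A / k ^ i % k) + (A / k ^ t % k) % g) :
    ∀ ℓ < n,
      (Finset.range k).val.map (fun i => ψ (ℓ + i * n)) =
      (Finset.range k).val.map (fun i => ψ (k * ℓ + i)) := by
  intro ℓ _
  obtain ⟨t, rfl⟩ : ∃ s, t = s + 1 := ⟨t - 1, by omega⟩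
  obtain rfl : ψ = digitWeight k (t + 1) g := funext hψ
  subst hn hg
  set b := ℓ / k ^ t
  set S := ∑ m ∈ range t, ℓ / k ^ m % k
  have hgk := Nat.gcd_dvd_right q k
  have hcol : ∀ i < k, digitWeight k (t + 1) (q.gcd k) (ℓ + i * (k ^ (t + 1 - 1) * q)) =
      S + ((b + i * q) % k + (b + i * q) / k % q.gcd k) := fun i hi => by
    rw [Nat.add_sub_cancel, digitWeight_add, mul_left_comm, sum_range_add_pow_mul_div_pow_mod
      (by omega), Nat.add_mul_div_left _ _ (pow_pos (by omega) t), digitWeight_one hgk]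
  have hrow : ∀ i < k, digitWeight k (t + 1) (q.gcd k) (k * ℓ + i) = S + (b % q.gcd k + i) :=
    fun i hi => by
      rw [digitWeight_succ_mul_add t ℓ hi, digitWeight, Nat.mod_mod_of_dvd _ hgk]
      ring
  calc _ = ((range k).val.map fun i => (b + i * q) % k + (b + i * q) / k % q.gcd k).map
          (S + ·) := by
        rw [Multiset.map_map]
        exact Multiset.map_congr rfl fun i hi => hcol i (mem_range.1 hi)
    _ = ((range k).val.map (b % q.gcd k + ·)).map (S + ·) := by
        rw [Nat.range_val_map_add_mul_mod_add_div_mod b hco]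
    _ = _ := by
        rw [Multiset.map_map]
        exact Multiset.map_congr rfl fun i hi => (hrow i (mem_range.1 hi)).symm

theorem column_block_weights_general (N n k t q : ℕ) (hk : 2 ≤ k) (ht : 1 ≤ t)
    (hq : 1 ≤ q) (hN : N = k ^ t * q) (hn : n = k ^ (t - 1) * q)
    (g : ℕ) (hg : g = Nat.gcd q k) (hco : Nat.Coprime (q / g) g)
    (ψ : ℕ → ℕ)
    (hψ : ∀ A, ψ A = (∑ i ∈ Finset.range t, A / k ^ i % k) + (A / k ^ t % k) % g) :
    ∀ ℓ < n,
      (Finset.range k).val.map (fun i => ψ (ℓ + i * n)) =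
      (Finset.range k).val.map (fun i => ψ (k * ℓ + i)) :=
  column_block_weights_general_general n k t q ht hn g hg hco ψ hψ
end
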